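/- Let k ≥ 1 and let z₁,…,z_n be distinct nonzero points of 𝔻; set B_𝔇(z) = Π_{i=1}^n (z − z_i)/(1 − conj(z_i)·z). Then there exist matrices a, b ∈ ℂ^{k×k} with a invertible and a*·a + b*·b = I_k such that {F ∈ (H∞_1)^{k×k} : F(z_i) = 0 for i = 1,…,n} = {B_𝔇·G : G : 𝔻 → ℂ^{k×k} has holomorphic entries, sup_{z∈𝔻}‖G(z)‖ < ∞, and there exists U ∈ ℂ^{k×k} with G(0) = a·U and G'(0) = b·U}. -/

import Mathlib

/-!
Writing `B = BD z`, a holomorphic `F` vanishing at the distinct points `z i` factors as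
`F = B • G` with `G` holomorphic (divide out the linear factors one at a time with `dslope`,
then multiply back the denominators of `B`). Since `|B| ≤ 1` on the disk and `|B|` is bounded
below near the unit circle, `F` is bounded iff `G` is. Because `B 0 ≠ 0`, the condition
`F'(0) = B'(0) G(0) + B(0) G'(0) = 0` says exactly `G'(0) = μ G(0)` with `μ = -B'(0) / B(0)`,
and this is the condition `G(0) = a U`, `G'(0) = b U` for `a = s • 1`, `b = s μ • 1`,
normalised by `s = (1 + |μ|²)^(-1/2)`.
-/

open scoped ComplexConjugate ComplexOrder
open Matrix

noncomputable section

namespace CNP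

def unitDisk : Set ℂ := {z : ℂ | ‖z‖ < 1}

def MemS1 (s : ℂ → ℂ) : Prop :=
  DifferentiableOn ℂ s unitDisk ∧ (∀ z ∈ unitDisk, ‖s z‖ ≤ 1) ∧ deriv s 0 = 0

def Kab (α β z w : ℂ) : ℂ :=
  (α + β * z) * conj (α + β * w) + z ^ 2 * conj w ^ 2 / (1 - z * conj w)

def opNormM {m n : Type*} [Fintype m] [Fintype n] [DecidableEq n] (A : Matrix m n ℂ) : ℝ :=
  ‖LinearMap.toContinuousLinearMap (Matrix.toEuclideanLin A)‖

def matDeriv {k l : ℕ} (F : ℂ → Matrix (Fin k) (Fin l) ℂ) (w : ℂ) : Matrix (Fin k) (Fin l) ℂ :=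
  Matrix.of fun i j => deriv (fun z => F z i j) w

def matHol {k l : ℕ} (F : ℂ → Matrix (Fin k) (Fin l) ℂ) : Prop :=
  ∀ i j, DifferentiableOn ℂ (fun z => F z i j) unitDisk

def MemS1M {k : ℕ} (S : ℂ → Matrix (Fin k) (Fin k) ℂ) : Prop :=
  matHol S ∧ (∀ z ∈ unitDisk, opNormM (S z) ≤ 1) ∧ matDeriv S 0 = 0

def MemG {l l' : ℕ} (α β : Matrix (Fin l') (Fin l) ℂ) : Prop :=
  α * αᴴ + β * βᴴ = 1 ∧ Function.Injective α.mulVec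

def KabM {l l' : ℕ} (α β : Matrix (Fin l') (Fin l) ℂ) (z w : ℂ) : Matrix (Fin l) (Fin l) ℂ :=
  (αᴴ + conj w • βᴴ) * (α + z • β) + (conj w ^ 2 * z ^ 2 / (1 - conj w * z)) • 1

def taylorCoeff {k l : ℕ} (F : ℂ → Matrix (Fin k) (Fin l) ℂ) (m : ℕ) :
    Matrix (Fin k) (Fin l) ℂ :=
  Matrix.of fun i j => iteratedDeriv m (fun z => F z i j) 0 / m.factorial

def frobSq {k l : ℕ} (A : Matrix (Fin k) (Fin l) ℂ) : ℝ :=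
  ∑ i, ∑ j, Complex.normSq (A i j)

def MemH2 {k l : ℕ} (F : ℂ → Matrix (Fin k) (Fin l) ℂ) : Prop :=
  matHol F ∧ Summable fun m => frobSq (taylorCoeff F m)

def h2inner {k l : ℕ} (F G : ℂ → Matrix (Fin k) (Fin l) ℂ) : ℂ :=
  ∑' m : ℕ, Matrix.trace ((taylorCoeff G m)ᴴ * taylorCoeff F m)

def h2norm {k l : ℕ} (F : ℂ → Matrix (Fin k) (Fin l) ℂ) : ℝ :=
  Real.sqrt (∑' m : ℕ, frobSq (taylorCoeff F m))

def MemH2ab {k l l' : ℕ} (α β : Matrix (Fin l') (Fin l) ℂ)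
    (F : ℂ → Matrix (Fin k) (Fin l) ℂ) : Prop :=
  MemH2 F ∧ ∃ U : Matrix (Fin k) (Fin l') ℂ, F 0 = U * α ∧ matDeriv F 0 = U * β

def MemHinf {k l : ℕ} (F : ℂ → Matrix (Fin k) (Fin l) ℂ) : Prop :=
  matHol F ∧ ∃ C : ℝ, ∀ z ∈ unitDisk, opNormM (F z) ≤ C

def hinfNorm {k l : ℕ} (F : ℂ → Matrix (Fin k) (Fin l) ℂ) : ℝ :=
  sSup ((fun z => opNormM (F z)) '' unitDisk)

def MemHinf1 {k : ℕ} (S : ℂ → Matrix (Fin k) (Fin k) ℂ) : Prop :=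
  MemHinf S ∧ matDeriv S 0 = 0

def blaschke {m : ℕ} (lam : Fin m → ℂ) (r : Fin m → ℕ) (z : ℂ) : ℂ :=
  ∏ i, ((z - lam i) / (1 - conj (lam i) * z)) ^ r i

def BD {n : ℕ} (z : Fin n → ℂ) (ζ : ℂ) : ℂ :=
  ∏ i, (ζ - z i) / (1 - conj (z i) * ζ)

open scoped Topology

lemma isOpen_unitDisk : IsOpen unitDisk :=
  isOpen_lt continuous_norm continuous_const

lemma zero_mem_unitDisk : (0 : ℂ) ∈ unitDisk := by
  simp [unitDisk]

lemma one_sub_conj_mul_ne_zero {w ζ : ℂ} (hw : ‖w‖ < 1) (hζ : ‖ζ‖ ≤ 1) :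
    1 - conj w * ζ ≠ 0 := by
  have hlt : ‖conj w * ζ‖ < 1 := by
    rw [norm_mul, Complex.norm_conj]
    exact mul_lt_one_of_nonneg_of_lt_one_left (norm_nonneg w) hw hζ
  intro h
  rw [← sub_eq_zero.mp h, norm_one] at hlt
  exact lt_irrefl _ hlt

def blaschkeFactor (w ζ : ℂ) : ℂ :=
  (ζ - w) / (1 - conj w * ζ)

lemma BD_eq_prod_blaschkeFactor {n : ℕ} (z : Fin n → ℂ) (ζ : ℂ) :
    BD z ζ = ∏ i, blaschkeFactor (z i) ζ :=
  rfl

lemma normSq_one_sub_conj_mul_sub_normSq_sub (w ζ : ℂ) :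
    Complex.normSq (1 - conj w * ζ) - Complex.normSq (ζ - w) =
      (1 - Complex.normSq w) * (1 - Complex.normSq ζ) := by
  simp only [Complex.normSq_apply, Complex.sub_re, Complex.sub_im, Complex.mul_re,
    Complex.mul_im, Complex.one_re, Complex.one_im, Complex.conj_re, Complex.conj_im]
  ring

lemma norm_blaschkeFactor_le_one {w ζ : ℂ} (hw : ‖w‖ < 1) (hζ : ‖ζ‖ < 1) :
    ‖blaschkeFactor w ζ‖ ≤ 1 := by
  have hnormSq : Complex.normSq (ζ - w) ≤ Complex.normSq (1 - conj w * ζ) := by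
    have hw' : Complex.normSq w ≤ 1 := by
      rw [Complex.normSq_eq_norm_sq]; nlinarith [norm_nonneg w]
    have hζ' : Complex.normSq ζ ≤ 1 := by
      rw [Complex.normSq_eq_norm_sq]; nlinarith [norm_nonneg ζ]
    nlinarith [normSq_one_sub_conj_mul_sub_normSq_sub w ζ,
      mul_nonneg (sub_nonneg.mpr hw') (sub_nonneg.mpr hζ')]
  rw [blaschkeFactor, norm_div]
  refine div_le_one_of_le₀ ?_ (norm_nonneg _)
  rw [Complex.norm_def, Complex.norm_def]
  exact Real.sqrt_le_sqrt hnormSq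

lemma sub_norm_div_two_le_norm_blaschkeFactor {w ζ : ℂ} (hw : ‖w‖ < 1) (hζ : ‖ζ‖ < 1) :
    (‖ζ‖ - ‖w‖) / 2 ≤ ‖blaschkeFactor w ζ‖ := by
  have hden_pos : 0 < ‖1 - conj w * ζ‖ := norm_pos_iff.mpr (one_sub_conj_mul_ne_zero hw hζ.le)
  have hden_le : ‖1 - conj w * ζ‖ ≤ 2 := by
    calc ‖1 - conj w * ζ‖ ≤ 1 + ‖w‖ * ‖ζ‖ := by
          simpa [norm_mul] using norm_sub_le (1 : ℂ) (conj w * ζ)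
      _ ≤ 2 := by nlinarith [norm_nonneg w, norm_nonneg ζ]
  calc (‖ζ‖ - ‖w‖) / 2 ≤ ‖ζ - w‖ / 2 := by gcongr; exact norm_sub_norm_le ζ w
    _ ≤ ‖ζ - w‖ / ‖1 - conj w * ζ‖ := div_le_div_of_nonneg_left (norm_nonneg _) hden_pos hden_le
    _ = ‖blaschkeFactor w ζ‖ := (norm_div _ _).symm

lemma exists_eq_prod_sub_mul {U : Set ℂ} (hU : IsOpen U) :
    ∀ {n : ℕ} {z : Fin n → ℂ} {f : ℂ → ℂ}, (∀ i, z i ∈ U) → Function.Injective z →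
      DifferentiableOn ℂ f U → (∀ i, f (z i) = 0) →
      ∃ g : ℂ → ℂ, DifferentiableOn ℂ g U ∧ ∀ ζ, f ζ = (∏ i, (ζ - z i)) * g ζ
  | 0, _, f, _, _, hf, _ => ⟨f, hf, fun ζ => by simp⟩
  | n + 1, z, f, hz, hinj, hf, hfz => by
    have hslope : DifferentiableOn ℂ (dslope f (z 0)) U :=
      (Complex.differentiableOn_dslope (hU.mem_nhds (hz 0))).mpr hf
    have hslope_zero : ∀ i : Fin n, dslope f (z 0) (z i.succ) = 0 := fun i => by
      rw [dslope_of_ne f fun h => Fin.succ_ne_zero i (hinj h), slope_def_field, hfz, hfz,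
        sub_zero, zero_div]
    obtain ⟨g, hg, hfg⟩ := exists_eq_prod_sub_mul hU (fun i => hz i.succ)
      (hinj.comp (Fin.succ_injective n)) hslope hslope_zero
    refine ⟨g, hg, fun ζ => ?_⟩
    have hsplit : f ζ = (ζ - z 0) * dslope f (z 0) ζ := by
      simpa [hfz 0] using (sub_smul_dslope f (z 0) ζ).symm
    rw [hsplit, hfg, Fin.prod_univ_succ, mul_assoc]

section OperatorNorm

variable {m n : Type*} [Fintype m] [Fintype n] [DecidableEq n]

lemma opNormM_nonneg (A : Matrix m n ℂ) : 0 ≤ opNormM A :=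
  norm_nonneg _

lemma opNormM_smul (c : ℂ) (A : Matrix m n ℂ) : opNormM (c • A) = ‖c‖ * opNormM A := by
  rw [opNormM, map_smul, map_smul, norm_smul, opNormM]

lemma continuous_opNormM : Continuous (opNormM : Matrix m n ℂ → ℝ) :=
  (LinearMap.toContinuousLinearMap.toLinearMap.comp
    (Matrix.toEuclideanLin (𝕜 := ℂ) (m := m) (n := n)).toLinearMap
    ).continuous_of_finiteDimensional.norm

end OperatorNorm

section MatrixFunctions

variable {k l : ℕ}

lemma matHol.continuousOn_opNormM {G : ℂ → Matrix (Fin k) (Fin l) ℂ} (hG : matHol G) :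
    ContinuousOn (fun ζ => opNormM (G ζ)) unitDisk :=
  continuous_opNormM.comp_continuousOn
    (continuousOn_pi.mpr fun i => continuousOn_pi.mpr fun j => (hG i j).continuousOn)

lemma matHol.of_eqOn_smul {φ : ℂ → ℂ} {F G : ℂ → Matrix (Fin k) (Fin l) ℂ}
    (hφ : DifferentiableOn ℂ φ unitDisk) (hG : matHol G)
    (hFG : ∀ ζ ∈ unitDisk, F ζ = φ ζ • G ζ) : matHol F := fun i j =>
  (hφ.mul (hG i j)).congr fun ζ hζ => by simp [hFG ζ hζ]

lemma matDeriv_eq_of_eventuallyEq_smul {φ : ℂ → ℂ} {F G : ℂ → Matrix (Fin k) (Fin l) ℂ}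
    {w : ℂ} (hφ : DifferentiableAt ℂ φ w) (hG : ∀ i j, DifferentiableAt ℂ (fun ζ => G ζ i j) w)
    (hFG : F =ᶠ[𝓝 w] fun ζ => φ ζ • G ζ) :
    matDeriv F w = deriv φ w • G w + φ w • matDeriv G w := by
  ext i j
  have hFG_ij : (fun ζ => F ζ i j) =ᶠ[𝓝 w] fun ζ => φ ζ * G ζ i j :=
    hFG.mono fun ζ hζ => by simp [hζ]
  simp only [matDeriv, Matrix.of_apply, Matrix.add_apply, Matrix.smul_apply, smul_eq_mul]
  rw [hFG_ij.deriv_eq, deriv_fun_mul hφ (hG i j)]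

end MatrixFunctions

lemma exists_isUnit_det_conjTranspose_mul_add_eq_one {m n : Type*} [Fintype n] [DecidableEq n]
    (μ : ℂ) : ∃ a b : Matrix n n ℂ, IsUnit a.det ∧ aᴴ * a + bᴴ * b = 1 ∧
      ∀ A B : Matrix n m ℂ, (∃ U : Matrix n m ℂ, A = a * U ∧ B = b * U) ↔ B = μ • A := by
  set s : ℝ := (√(1 + ‖μ‖ ^ 2))⁻¹
  have hs : s ≠ 0 := inv_ne_zero (Real.sqrt_pos.mpr (by positivity)).ne'
  have hsC : (s : ℂ) ≠ 0 := Complex.ofReal_ne_zero.mpr hs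
  have hnorm : (s : ℂ) * s * (1 + μ * conj μ) = 1 := by
    have hreal : s * s * (1 + ‖μ‖ ^ 2) = 1 := by
      rw [← mul_inv, Real.mul_self_sqrt (by positivity), inv_mul_cancel₀ (by positivity)]
    rw [Complex.mul_conj, Complex.normSq_eq_norm_sq]
    exact_mod_cast hreal
  refine ⟨(s : ℂ) • 1, ((s : ℂ) * μ) • 1, ?_, ?_, fun A B => ⟨?_, fun hBA => ?_⟩⟩
  · rw [Matrix.det_smul, Matrix.det_one, mul_one]
    exact (pow_ne_zero _ hsC).isUnit
  · simp only [Matrix.conjTranspose_smul, Matrix.conjTranspose_one, Matrix.smul_mul,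
      Matrix.mul_smul, Matrix.one_mul, smul_smul, ← add_smul, star_mul', RCLike.star_def,
      Complex.conj_ofReal]
    convert one_smul ℂ (1 : Matrix n n ℂ) using 2
    linear_combination hnorm
  · rintro ⟨U, hA, hB⟩
    rw [hA, hB]
    simp only [Matrix.smul_mul, Matrix.one_mul, smul_smul, mul_comm]
  · refine ⟨(s : ℂ)⁻¹ • A, ?_, ?_⟩
    · rw [Matrix.smul_mul, Matrix.one_mul, smul_inv_smul₀ hsC]
    · rw [Matrix.smul_mul, Matrix.one_mul, smul_smul, mul_right_comm, mul_inv_cancel₀ hsC,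
        one_mul, hBA]

section BlaschkeProduct

variable {n : ℕ} {z : Fin n → ℂ}

lemma BD_apply_self (i : Fin n) : BD z (z i) = 0 :=
  Finset.prod_eq_zero (Finset.mem_univ i) (by simp)

lemma BD_zero_ne_zero (hz0 : ∀ i, z i ≠ 0) : BD z 0 ≠ 0 :=
  Finset.prod_ne_zero_iff.mpr fun i _ => by simpa using hz0 i

lemma differentiableOn_BD (hz : ∀ i, z i ∈ unitDisk) : DifferentiableOn ℂ (BD z) unitDisk :=
  DifferentiableOn.fun_finsetProd fun i _ =>
    (differentiableOn_id.sub_const _).div (by fun_prop) fun ζ hζ =>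
      one_sub_conj_mul_ne_zero (hz i) (le_of_lt hζ)

lemma norm_BD_le_one (hz : ∀ i, z i ∈ unitDisk) {ζ : ℂ} (hζ : ζ ∈ unitDisk) :
    ‖BD z ζ‖ ≤ 1 := by
  rw [BD_eq_prod_blaschkeFactor, norm_prod]
  exact Finset.prod_le_one (fun _ _ => norm_nonneg _)
    fun i _ => norm_blaschkeFactor_le_one (hz i) hζ

lemma exists_le_norm_BD (hz : ∀ i, z i ∈ unitDisk) :
    ∃ r < 1, ∃ δ > 0, ∀ ζ ∈ unitDisk, r ≤ ‖ζ‖ → δ ≤ ‖BD z ζ‖ := by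
  have hsub : Set.range z ⊆ Metric.ball 0 1 := by
    rintro _ ⟨i, rfl⟩
    simpa [unitDisk] using hz i
  obtain ⟨r, ⟨-, hr⟩, hzr⟩ :=
    exists_pos_lt_subset_ball one_pos (Set.finite_range z).isClosed hsub
  have hzr' : ∀ i, ‖z i‖ < r := fun i => by simpa using hzr ⟨i, rfl⟩
  refine ⟨r, hr, ∏ i, (r - ‖z i‖) / 2,
    Finset.prod_pos fun i _ => by linarith [hzr' i], fun ζ hζ hrζ => ?_⟩
  rw [BD_eq_prod_blaschkeFactor, norm_prod]
  refine Finset.prod_le_prod (fun i _ => by linarith [hzr' i]) fun i _ => ?_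
  exact (div_le_div_of_nonneg_right (by linarith) zero_le_two).trans
    (sub_norm_div_two_le_norm_blaschkeFactor (hz i) hζ)

lemma exists_eqOn_BD_mul (hz : ∀ i, z i ∈ unitDisk) (hinj : Function.Injective z)
    {f : ℂ → ℂ} (hf : DifferentiableOn ℂ f unitDisk) (hfz : ∀ i, f (z i) = 0) :
    ∃ g : ℂ → ℂ, DifferentiableOn ℂ g unitDisk ∧ ∀ ζ ∈ unitDisk, f ζ = BD z ζ * g ζ := by
  obtain ⟨h, hh, hfh⟩ := exists_eq_prod_sub_mul isOpen_unitDisk hz hinj hf hfz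
  have hden : ∀ ζ ∈ unitDisk, ∏ i, (1 - conj (z i) * ζ) ≠ 0 := fun ζ hζ =>
    Finset.prod_ne_zero_iff.mpr fun i _ => one_sub_conj_mul_ne_zero (hz i) (le_of_lt hζ)
  refine ⟨fun ζ => (∏ i, (1 - conj (z i) * ζ)) * h ζ,
    (DifferentiableOn.fun_finsetProd fun i _ => by fun_prop).mul hh, fun ζ hζ => ?_⟩
  rw [hfh, BD, Finset.prod_div_distrib, ← mul_assoc, div_mul_cancel₀ _ (hden ζ hζ)]

lemma exists_eqOn_BD_smul {k l : ℕ} (hz : ∀ i, z i ∈ unitDisk) (hinj : Function.Injective z)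
    {F : ℂ → Matrix (Fin k) (Fin l) ℂ} (hF : matHol F) (hFz : ∀ i, F (z i) = 0) :
    ∃ G, matHol G ∧ ∀ ζ ∈ unitDisk, F ζ = BD z ζ • G ζ := by
  choose g hg hFg using fun i j =>
    exists_eqOn_BD_mul hz hinj (hF i j) fun m => by simp [hFz m]
  exact ⟨fun ζ => Matrix.of fun i j => g i j ζ, hg, fun ζ hζ => by ext i j; simp [hFg i j ζ hζ]⟩

lemma exists_bound_of_norm_BD_mul_le (hz : ∀ i, z i ∈ unitDisk) {φ : ℂ → ℝ}
    (hφ : ContinuousOn φ unitDisk) (hφ0 : ∀ ζ, 0 ≤ φ ζ) {C : ℝ}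
    (hC : ∀ ζ ∈ unitDisk, ‖BD z ζ‖ * φ ζ ≤ C) :
    ∃ C' : ℝ, ∀ ζ ∈ unitDisk, φ ζ ≤ C' := by
  obtain ⟨r, hr, δ, hδ, hBD⟩ := exists_le_norm_BD hz
  have hball : Metric.closedBall (0 : ℂ) r ⊆ unitDisk := fun ζ hζ =>
    (mem_closedBall_zero_iff.mp hζ).trans_lt hr
  obtain ⟨C₁, hC₁⟩ := (isCompact_closedBall (0 : ℂ) r).exists_bound_of_continuousOn
    (hφ.mono hball)
  refine ⟨max C₁ (C / δ), fun ζ hζ => ?_⟩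
  rcases le_or_gt ‖ζ‖ r with hζr | hζr
  · exact (le_abs_self _).trans
      ((hC₁ ζ (mem_closedBall_zero_iff.mpr hζr)).trans (le_max_left _ _))
  · refine le_max_of_le_right ((le_div_iff₀ hδ).mpr ?_)
    calc φ ζ * δ ≤ φ ζ * ‖BD z ζ‖ := mul_le_mul_of_nonneg_left (hBD ζ hζ hζr.le) (hφ0 ζ)
      _ ≤ C := by rw [mul_comm]; exact hC ζ hζ

lemma matDeriv_eq_zero_iff_of_eqOn_BD_smul {k l : ℕ} (hz : ∀ i, z i ∈ unitDisk)
    (hz0 : ∀ i, z i ≠ 0) {F G : ℂ → Matrix (Fin k) (Fin l) ℂ} (hG : matHol G)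
    (hFG : ∀ ζ ∈ unitDisk, F ζ = BD z ζ • G ζ) :
    matDeriv F 0 = 0 ↔ matDeriv G 0 = (-deriv (BD z) 0 / BD z 0) • G 0 := by
  have h0 : unitDisk ∈ 𝓝 (0 : ℂ) := isOpen_unitDisk.mem_nhds zero_mem_unitDisk
  have hc := BD_zero_ne_zero hz0
  rw [matDeriv_eq_of_eventuallyEq_smul ((differentiableOn_BD hz).differentiableAt h0)
    (fun i j => (hG i j).differentiableAt h0) (Filter.eventuallyEq_of_mem h0 hFG)]
  set c := BD z 0
  set d := deriv (BD z) 0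
  constructor
  · intro h
    calc matDeriv G 0 = c⁻¹ • (c • matDeriv G 0) := (inv_smul_smul₀ hc _).symm
      _ = c⁻¹ • -(d • G 0) := by rw [eq_neg_of_add_eq_zero_right h]
      _ = (-d / c) • G 0 := by rw [smul_neg, smul_smul, ← neg_smul, neg_div, inv_mul_eq_div]
  · intro h
    rw [h, smul_smul, mul_div_cancel₀ _ hc, neg_smul, add_neg_cancel]

end BlaschkeProduct

theorem stmt12_general (k n : ℕ) (z : Fin n → ℂ)
    (hz : ∀ i, z i ∈ unitDisk) (hz0 : ∀ i, z i ≠ 0) (hinj : Function.Injective z) :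
    ∃ a b : Matrix (Fin k) (Fin k) ℂ, IsUnit a.det ∧ aᴴ * a + bᴴ * b = 1 ∧
      ∀ F : ℂ → Matrix (Fin k) (Fin k) ℂ,
        (MemHinf1 F ∧ ∀ i, F (z i) = 0) ↔
        (∃ G : ℂ → Matrix (Fin k) (Fin k) ℂ, matHol G ∧
          (∃ C : ℝ, ∀ ζ ∈ unitDisk, opNormM (G ζ) ≤ C) ∧
          (∃ U : Matrix (Fin k) (Fin k) ℂ, G 0 = a * U ∧ matDeriv G 0 = b * U) ∧
          ∀ ζ ∈ unitDisk, F ζ = BD z ζ • G ζ) := by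
  obtain ⟨a, b, ha, hab, hpair⟩ :=
    exists_isUnit_det_conjTranspose_mul_add_eq_one (m := Fin k) (n := Fin k)
      (-deriv (BD z) 0 / BD z 0)
  refine ⟨a, b, ha, hab, fun F => ⟨?_, ?_⟩⟩
  · rintro ⟨⟨⟨hF, C, hFC⟩, hF'⟩, hFz⟩
    obtain ⟨G, hG, hFG⟩ := exists_eqOn_BD_smul hz hinj hF hFz
    refine ⟨G, hG, ?_, (hpair _ _).mpr
      ((matDeriv_eq_zero_iff_of_eqOn_BD_smul hz hz0 hG hFG).mp hF'), hFG⟩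
    refine exists_bound_of_norm_BD_mul_le (C := C) hz hG.continuousOn_opNormM
      (fun ζ => opNormM_nonneg _) fun ζ hζ => ?_
    rw [← opNormM_smul, ← hFG ζ hζ]
    exact hFC ζ hζ
  · rintro ⟨G, hG, ⟨C, hGC⟩, hGab, hFG⟩
    refine ⟨⟨⟨hG.of_eqOn_smul (differentiableOn_BD hz) hFG, C, fun ζ hζ => ?_⟩,
      (matDeriv_eq_zero_iff_of_eqOn_BD_smul hz hz0 hG hFG).mpr ((hpair _ _).mp hGab)⟩,
      fun i => by rw [hFG _ (hz i), BD_apply_self, zero_smul]⟩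
    rw [hFG ζ hζ, opNormM_smul]
    exact (mul_le_of_le_one_left (opNormM_nonneg _) (norm_BD_le_one hz hζ)).trans (hGC ζ hζ)

/-- Proposition 2.5.  The homogeneous-interpolation ideal
`ℐ_𝔇 ⊂ (H^∞_1)^{k×k}` equals `B_𝔇 · H^∞_{r,(a,b)}` for a suitable normalized pair
`(a,b)` with `a` invertible and `aᴴ a + bᴴ b = I`. -/
theorem stmt12 (k n : ℕ) (hk : 1 ≤ k) (z : Fin n → ℂ)
    (hz : ∀ i, z i ∈ unitDisk) (hz0 : ∀ i, z i ≠ 0) (hinj : Function.Injective z) :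
    ∃ a b : Matrix (Fin k) (Fin k) ℂ, IsUnit a.det ∧ aᴴ * a + bᴴ * b = 1 ∧
      ∀ F : ℂ → Matrix (Fin k) (Fin k) ℂ,
        (MemHinf1 F ∧ ∀ i, F (z i) = 0) ↔
        (∃ G : ℂ → Matrix (Fin k) (Fin k) ℂ, matHol G ∧
          (∃ C : ℝ, ∀ ζ ∈ unitDisk, opNormM (G ζ) ≤ C) ∧
          (∃ U : Matrix (Fin k) (Fin k) ℂ, G 0 = a * U ∧ matDeriv G 0 = b * U) ∧
          ∀ ζ ∈ unitDisk, F ζ = BD z ζ • G ζ) :=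
  stmt12_general k n z hz hz0 hinj

end CNP
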